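/- arXiv:0911.5103 — 4 statements merged into one kernel-verified Lean document; each statement's English description precedes it below -/
import Mathlib

section
/- Let p be a prime, X a finite group, P a Sylow p-subgroup of X, and R a subgroup of P which is not weakly closed in P with respect to X. Then there exists x ∈ X such that R ≠ R^x, R normalizes R^x, and R^x normalizes R. -/
/-- The conjugate `R^x = x⁻¹ R x` of a subgroup (written here with `MulAut.conj x⁻¹`,
i.e. the image of `R` under `g ↦ x⁻¹ * g * x`). -/
def conjSubgroup {X : Type*} [Group X] (x : X) (R : Subgroup X) : Subgroup X :=
  R.map (MulAut.conj x⁻¹).toMonoidHom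

/-!
Descend on the subgroup `W = S ⊔ T` generated by two distinct conjugates `S`, `T` of `R` that
generate a `p`-group; `R^x ≤ P` and `R` is such a pair. If `S` is not normal in `W`, the
normalizer condition in the nilpotent group `W` gives `w ∈ W` normalizing `N_W(S) < W` but not
`S`. Then `S^w ≠ S`, and `S^w ⊔ S ≤ N_W(S)` is a smaller such pair. So the two members of a
minimal pair normalize each other, and conjugating the pair back turns it into `R, R^x`.
-/

open Subgroup

section Conjugation

variable {X : Type*} [Group X]

lemma mem_conjSubgroup_iff {x g : X} {R : Subgroup X} :
    g ∈ conjSubgroup x R ↔ x * g * x⁻¹ ∈ R := by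
  constructor
  · rintro ⟨r, hr, rfl⟩
    simpa [mul_assoc] using hr
  · exact fun h => ⟨x * g * x⁻¹, h, by simp [mul_assoc]⟩

@[simp]
lemma conjSubgroup_one (R : Subgroup X) : conjSubgroup 1 R = R := by
  ext g; simp [mem_conjSubgroup_iff]

lemma conjSubgroup_conjSubgroup (x y : X) (R : Subgroup X) :
    conjSubgroup y (conjSubgroup x R) = conjSubgroup (x * y) R := by
  ext g
  simp only [mem_conjSubgroup_iff, mul_inv_rev, mul_assoc]

lemma conjSubgroup_injective (x : X) : Function.Injective (conjSubgroup x) :=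
  map_injective (MulAut.conj x⁻¹).injective

lemma conjSubgroup_mono (x : X) : Monotone (conjSubgroup x) :=
  fun _ _ => map_mono

lemma normalizer_conjSubgroup (x : X) (R : Subgroup X) :
    normalizer (conjSubgroup x R : Set X) = conjSubgroup x (normalizer (R : Set X)) :=
  (map_equiv_normalizer_eq R (MulAut.conj x⁻¹)).symm

lemma conjSubgroup_le_normalizer_conjSubgroup_iff {x : X} {S T : Subgroup X} :
    conjSubgroup x S ≤ normalizer (conjSubgroup x T : Set X) ↔ S ≤ normalizer (T : Set X) := by
  rw [normalizer_conjSubgroup]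
  exact map_le_map_iff_of_injective (MulAut.conj x⁻¹).injective

lemma conjSubgroup_eq_self_iff {x : X} {R : Subgroup X} :
    conjSubgroup x R = R ↔ x ∈ normalizer (R : Set X) := by
  simp only [SetLike.ext_iff, mem_conjSubgroup_iff, mem_normalizer_iff]
  exact forall_congr' fun _ => iff_comm

end Conjugation

section PGroup

variable {p : ℕ} [Fact p.Prime] {X : Type*} [Group X] [Finite X]

lemma IsPGroup.lt_normalizer_inf {H K : Subgroup X} (hK : IsPGroup p K) (hHK : H < K) :
    H < normalizer (H : Set X) ⊓ K := by
  have := hK.isNilpotent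
  have hlt : H.subgroupOf K < ⊤ :=
    lt_top_iff_ne_top.2 fun h => hHK.not_ge (subgroupOf_eq_top.1 h)
  have := Group.normalizerCondition_of_isNilpotent _ hlt
  rwa [← subgroupOf_normalizer_eq hHK.le,
    ← map_lt_map_iff_of_injective K.subtype_injective, subgroupOf_map_subtype,
    subgroupOf_map_subtype, inf_of_le_left hHK.le] at this

lemma IsPGroup.exists_conjSubgroup_ne_sup_lt {S W : Subgroup X} (hW : IsPGroup p W)
    (hSW : S ≤ W) (hS : ¬ W ≤ normalizer (S : Set X)) :
    ∃ w, conjSubgroup w S ≠ S ∧ conjSubgroup w S ⊔ S < W := by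
  set N := normalizer (S : Set X) ⊓ W
  have hSN : S ≤ N := le_inf le_normalizer hSW
  have hNW : N < W := inf_le_right.lt_of_ne fun h => hS (h ▸ inf_le_left)
  obtain ⟨w, ⟨hwN, hwW⟩, hw⟩ := SetLike.exists_of_lt (hW.lt_normalizer_inf hNW)
  refine ⟨w, fun h => hw ⟨conjSubgroup_eq_self_iff.1 h, hwW⟩, ?_⟩
  have hSwN : conjSubgroup w S ≤ N :=
    (conjSubgroup_mono w hSN).trans (conjSubgroup_eq_self_iff.2 hwN).le
  exact (sup_le hSwN hSN).trans_lt hNW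

end PGroup

lemma exists_conjSubgroup_normalizing_of_conjugates {X : Type*} [Group X] (R : Subgroup X)
    {a b : X} (hne : conjSubgroup a R ≠ conjSubgroup b R)
    (hba : conjSubgroup b R ≤ normalizer (conjSubgroup a R : Set X))
    (hab : conjSubgroup a R ≤ normalizer (conjSubgroup b R : Set X)) :
    ∃ x : X, R ≠ conjSubgroup x R ∧ conjSubgroup x R ≤ normalizer (R : Set X) ∧
      R ≤ normalizer (conjSubgroup x R : Set X) := by
  have hR : conjSubgroup a⁻¹ (conjSubgroup a R) = R := by
    rw [conjSubgroup_conjSubgroup, mul_inv_cancel, conjSubgroup_one]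
  have hRx : conjSubgroup a⁻¹ (conjSubgroup b R) = conjSubgroup (b * a⁻¹) R :=
    conjSubgroup_conjSubgroup b a⁻¹ R
  have hne' := (conjSubgroup_injective a⁻¹).ne hne
  have hba' := conjSubgroup_le_normalizer_conjSubgroup_iff (x := a⁻¹) |>.2 hba
  have hab' := conjSubgroup_le_normalizer_conjSubgroup_iff (x := a⁻¹) |>.2 hab
  rw [hR, hRx] at hne' hba' hab'
  exact ⟨b * a⁻¹, hne', hba', hab'⟩

lemma exists_conjSubgroup_normalizing_of_isPGroup_sup {p : ℕ} [Fact p.Prime] {X : Type*}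
    [Group X] [Finite X] (R : Subgroup X) {a b : X} (hne : conjSubgroup a R ≠ conjSubgroup b R)
    (hp : IsPGroup p ↥(conjSubgroup a R ⊔ conjSubgroup b R)) :
    ∃ x : X, R ≠ conjSubgroup x R ∧ conjSubgroup x R ≤ normalizer (R : Set X) ∧
      R ≤ normalizer (conjSubgroup x R : Set X) := by
  induction hW : conjSubgroup a R ⊔ conjSubgroup b R using WellFoundedLT.induction
    generalizing a b with
  | _ W ih =>
    rw [hW] at hp
    have haW : conjSubgroup a R ≤ W := hW ▸ le_sup_left
    have hbW : conjSubgroup b R ≤ W := hW ▸ le_sup_right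
    by_cases hN : W ≤ normalizer (conjSubgroup a R : Set X) ∧
        W ≤ normalizer (conjSubgroup b R : Set X)
    · exact exists_conjSubgroup_normalizing_of_conjugates R hne (hbW.trans hN.1)
        (haW.trans hN.2)
    · obtain ⟨c, hcW, hc⟩ :
          ∃ c, conjSubgroup c R ≤ W ∧ ¬ W ≤ normalizer (conjSubgroup c R : Set X) := by
        rcases not_and_or.1 hN with h | h
        exacts [⟨a, haW, h⟩, ⟨b, hbW, h⟩]
      obtain ⟨w, hw, hlt⟩ := hp.exists_conjSubgroup_ne_sup_lt hcW hc
      rw [conjSubgroup_conjSubgroup] at hw hlt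
      exact ih _ hlt hw (hp.to_le hlt.le) rfl

/-- Let `p` be a prime, `X` a finite group, `P` a Sylow `p`-subgroup of `X`,
and `R ≤ P` not weakly closed in `P` with respect to `X`.  Then there is `x ∈ X` with
`R ≠ R^x` such that `R` and `R^x` normalize each other. -/
theorem not_weakly_closed_normalize {p : ℕ} [Fact p.Prime] {X : Type*} [Group X] [Finite X]
    (P : Sylow p X) (R : Subgroup X) (hRP : R ≤ (P : Subgroup X))
    (hnwc : ¬ ∀ x : X, conjSubgroup x R ≤ (P : Subgroup X) → conjSubgroup x R = R) :
    ∃ x : X, R ≠ conjSubgroup x R ∧ conjSubgroup x R ≤ Subgroup.normalizer (R : Set X) ∧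
      R ≤ Subgroup.normalizer ((conjSubgroup x R : Subgroup X) : Set X) := by
  push Not at hnwc
  obtain ⟨x, hxP, hx⟩ := hnwc
  refine exists_conjSubgroup_normalizing_of_isPGroup_sup (p := p) R (a := x) (b := 1) ?_ ?_
  · rwa [conjSubgroup_one]
  · rw [conjSubgroup_one]
    exact P.isPGroup'.to_le (sup_le hxP hRP)
end

section
/- Let p be a prime, Q an extraspecial p-group, A a maximal abelian subgroup of Q (i.e., A is abelian and is not properly contained in any abelian subgroup of Q), and α an automorphism of Q which fixes every element of A. Then the order of α is a power of p. -/
/-!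
A maximal abelian subgroup `A` is self-centralizing, so it contains `Z(Q) = [Q, Q]` and is
therefore normal. For an automorphism `α` fixing `A` pointwise, normality makes `x⁻¹ * α x`
centralize `A`, hence lie in `A`; being fixed by `α`, it gives `(α ^ n) x = x * (x⁻¹ * α x) ^ n`.
Since `p`-th powers are central and `|Z(Q)| = p`, every element has order dividing `p ^ 2`,
so `α ^ (p ^ 2) = 1`.
-/

/-- A finite `p`-group is *extraspecial* if its center, derived subgroup and Frattini
subgroup coincide and have order `p`.  (Given that the derived subgroup equals the center
and has order `p`, the Frattini subgroup equals the center precisely when every `p`-th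
power is central.) -/
def IsExtraspecial (p : ℕ) (P : Type*) [Group P] : Prop :=
  IsPGroup p P ∧ Nat.card (Subgroup.center P) = p ∧
    commutator P = Subgroup.center P ∧ ∀ x : P, x ^ p ∈ Subgroup.center P

namespace Subgroup

variable {G : Type*} [Group G]

theorem centralizer_le_of_maximal_commutative {A : Subgroup G}
    (hA : ∀ x ∈ A, ∀ y ∈ A, x * y = y * x)
    (hAmax : ∀ B : Subgroup G, (∀ x ∈ B, ∀ y ∈ B, x * y = y * x) → A ≤ B → B = A) :
    centralizer A ≤ A := by
  intro c hc
  set B := closure (insert c (A : Set G))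
  have hcomm : ∀ x ∈ insert c (A : Set G), ∀ y ∈ insert c (A : Set G), x * y = y * x := by
    rintro x (rfl | hx) y (rfl | hy)
    · rfl
    · exact (mem_centralizer_iff.1 hc y hy).symm
    · exact mem_centralizer_iff.1 hc x hx
    · exact hA x hx y hy
  have hB : ∀ x ∈ B, ∀ y ∈ B, x * y = y * x := fun x hx y hy =>
    congrArg Subtype.val ((isMulCommutative_closure hcomm).is_comm.comm ⟨x, hx⟩ ⟨y, hy⟩)
  have hAB : A ≤ B := fun a ha => subset_closure (Set.mem_insert_of_mem c ha)
  exact hAmax B hB hAB ▸ subset_closure (Set.mem_insert c _)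

end Subgroup

namespace MulAut

variable {G : Type*} [Group G]

theorem inv_mul_apply_mem_centralizer {A : Subgroup G} [A.Normal] {α : MulAut G}
    (hα : ∀ a ∈ A, α a = a) (x : G) : x⁻¹ * α x ∈ Subgroup.centralizer A := by
  refine Subgroup.mem_centralizer_iff.2 fun a ha => ?_
  have hconj : α x * a * (α x)⁻¹ = x * a * x⁻¹ := by
    rw [← hα a ha, ← map_inv, ← map_mul, ← map_mul, hα _ (Subgroup.Normal.conj_mem ‹_› a ha x),
      hα a ha]
  calc a * (x⁻¹ * α x) = x⁻¹ * (x * a * x⁻¹) * α x := by group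
    _ = x⁻¹ * (α x * a * (α x)⁻¹) * α x := by rw [hconj]
    _ = x⁻¹ * α x * a := by group

theorem pow_apply_eq_mul_pow {α : MulAut G} {x : G} (hx : α (x⁻¹ * α x) = x⁻¹ * α x) (n : ℕ) :
    (α ^ n) x = x * (x⁻¹ * α x) ^ n := by
  induction n with
  | zero => simp
  | succ n ih =>
    rw [pow_succ', mul_apply, ih, map_mul, map_pow, hx, pow_succ' _ n, ← mul_assoc,
      mul_inv_cancel_left]

theorem pow_eq_one_of_fixes_of_centralizer_le {A : Subgroup G} [A.Normal]
    (hA : Subgroup.centralizer A ≤ A) {α : MulAut G} (hα : ∀ a ∈ A, α a = a) {m : ℕ}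
    (hm : ∀ g : G, g ^ m = 1) : α ^ m = 1 := by
  ext x
  rw [pow_apply_eq_mul_pow (hα _ (hA (inv_mul_apply_mem_centralizer hα x))), hm, mul_one]
  rfl

end MulAut

theorem IsExtraspecial.pow_sq_eq_one {p : ℕ} {Q : Type*} [Group Q] (hQ : IsExtraspecial p Q)
    (g : Q) : g ^ (p ^ 2) = 1 := by
  obtain ⟨-, hcard, -, hpow⟩ := hQ
  have h : (⟨g ^ p, hpow g⟩ : Subgroup.center Q) ^ Nat.card (Subgroup.center Q) = 1 :=
    pow_card_eq_one'
  rw [hcard] at h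
  rw [sq, pow_mul]
  exact congrArg Subtype.val h

theorem extraspecial_aut_fixing_maximal_abelian_is_p_element_general
    {p : ℕ} [Fact p.Prime] {Q : Type*} [Group Q]
    (hQ : IsExtraspecial p Q) (A : Subgroup Q)
    (hA : ∀ x ∈ A, ∀ y ∈ A, x * y = y * x)
    (hAmax : ∀ B : Subgroup Q, (∀ x ∈ B, ∀ y ∈ B, x * y = y * x) → A ≤ B → B = A)
    (α : MulAut Q) (hα : ∀ a ∈ A, α a = a) :
    ∃ n : ℕ, orderOf α = p ^ n := by
  have hCA := Subgroup.centralizer_le_of_maximal_commutative hA hAmax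
  have : A.Normal := .of_commutator_le Q <|
    hQ.2.2.1.trans_le ((Subgroup.center_le_centralizer _).trans hCA)
  have hα_pow := MulAut.pow_eq_one_of_fixes_of_centralizer_le hCA hα hQ.pow_sq_eq_one
  obtain ⟨n, -, hn⟩ := (Nat.dvd_prime_pow Fact.out).1 (orderOf_dvd_of_pow_eq_one hα_pow)
  exact ⟨n, hn⟩

/-- Let `Q` be an extraspecial `p`-group, `A` a maximal abelian subgroup
of `Q`, and `α` an automorphism of `Q` fixing every element of `A`.  Then the order of `α`
is a power of `p`. -/
theorem extraspecial_aut_fixing_maximal_abelian_is_p_element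
    {p : ℕ} [Fact p.Prime] {Q : Type*} [Group Q] [Finite Q]
    (hQ : IsExtraspecial p Q) (A : Subgroup Q)
    (hA : ∀ x ∈ A, ∀ y ∈ A, x * y = y * x)
    (hAmax : ∀ B : Subgroup Q, (∀ x ∈ B, ∀ y ∈ B, x * y = y * x) → A ≤ B → B = A)
    (α : MulAut Q) (hα : ∀ a ∈ A, α a = a) :
    ∃ n : ℕ, orderOf α = p ^ n :=
  extraspecial_aut_fixing_maximal_abelian_is_p_element_general hQ A hA hAmax α hα
end

section
/- Let F be a field, V a finite-dimensional vector space over F, and q a quadratic form on V such that the associated bilinear form f, defined by f(v,w) = q(v+w) − q(v) − q(w), is nondegenerate, and such that q has Witt index at least 1, i.e., there exists a nonzero vector v with q(v) = 0. Suppose g ∈ GL(V) stabilizes the set of singular one-dimensional subspaces of V, i.e., for every nonzero v ∈ V one has q(v) = 0 if and only if q(gv) = 0. Then g preserves q up to similarity: there exists a nonzero scalar λ ∈ F such that q(gv) = λ·q(v) for all v ∈ V. -/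
/-!
Let `Q := q ∘ g`; since `q 0 = Q 0 = 0`, the two forms have the same zero set. Fix a
hyperbolic pair `u, w` of `q` (`q u = q w = 0`, `polar q u w = 1`). If `polar q v u ≠ 0`,
the line `v + F u` meets the zero set of `q`, hence of `Q`, and comparing the two
intersection equations gives `Q v * polar q v u = q v * polar Q v u`. From this,
`polar Q · u` vanishes on the kernel of `polar q · u`, so `polar Q · u = λ • polar q · u`
with `λ = polar Q u w`, and likewise for `w`. Then `Q v = λ q v` wherever
`polar q v u ≠ 0`, and the remaining `v` are reached through `v + w`. Finally `λ ≠ 0`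
because `q (u + w) = 1`.
-/

open QuadraticMap

namespace QuadraticMap

variable {F V : Type*} [Field F] [AddCommGroup V] [Module F V]

theorem exists_isotropic_polar_eq_one (q : QuadraticForm F V)
    (hnd : ∀ v : V, (∀ w : V, polar q v w = 0) → v = 0) {u : V} (hu0 : u ≠ 0)
    (hu : q u = 0) : ∃ w, q w = 0 ∧ polar q u w = 1 := by
  obtain ⟨w₁, hw₁⟩ : ∃ w₁, polar q u w₁ ≠ 0 := by
    by_contra! h
    exact hu0 (hnd u h)
  obtain ⟨w₂, huw₂⟩ : ∃ w₂, polar q u w₂ = 1 :=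
    ⟨(polar q u w₁)⁻¹ • w₁, by rw [polar_smul_right, smul_eq_mul, inv_mul_cancel₀ hw₁]⟩
  have huu : polar q u u = 0 := by rw [polar_self, hu, smul_zero]
  refine ⟨w₂ - q w₂ • u, ?_, ?_⟩
  · rw [sub_eq_add_neg, QuadraticMap.map_add q, QuadraticMap.map_neg, QuadraticMap.map_smul,
      polar_neg_right, polar_smul_right, polar_comm, huw₂, hu]
    simp
  · rw [polar_sub_right, polar_smul_right, huu, huw₂]
    simp

variable {q Q : QuadraticForm F V}

theorem apply_mul_polar_eq_of_zero_imp (hqQ : ∀ x, q x = 0 → Q x = 0) {u v : V}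
    (hu : q u = 0) (hvu : polar q v u ≠ 0) :
    Q v * polar q v u = q v * polar Q v u := by
  -- `q` vanishes at `v + t • u`
  set t := -(q v / polar q v u)
  have hqx : q (v + t • u) = 0 := by
    rw [QuadraticMap.map_add q, QuadraticMap.map_smul, polar_smul_right, hu]
    simp only [t, smul_eq_mul]
    field_simp
    ring
  have hQx := hqQ _ hqx
  rw [QuadraticMap.map_add Q, QuadraticMap.map_smul, polar_smul_right, hqQ u hu] at hQx
  simp only [t, smul_eq_mul, mul_zero, add_zero] at hQx
  field_simp at hQx
  linear_combination hQx

theorem polar_eq_zero_of_zero_iff (h : ∀ x, q x = 0 ↔ Q x = 0) {u v : V} (hu : q u = 0)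
    (hvu : polar q v u = 0) : polar Q v u = 0 := by
  by_cases hv : q v = 0
  · have hq_add : q (v + u) = 0 := by
      rw [QuadraticMap.map_add q, hv, hu, hvu, add_zero, add_zero]
    have := (h _).mp hq_add
    rwa [QuadraticMap.map_add Q, (h v).mp hv, (h u).mp hu, zero_add, zero_add] at this
  · by_contra hQvu
    have := apply_mul_polar_eq_of_zero_imp (fun x => (h x).mpr) ((h u).mp hu) hQvu
    rw [hvu, mul_zero] at this
    exact mul_ne_zero hv hQvu this

theorem polar_eq_mul_polar_of_zero_iff (h : ∀ x, q x = 0 ↔ Q x = 0) {u w : V} (hu : q u = 0)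
    (hwu : polar q w u = 1) (v : V) : polar Q v u = polar Q w u * polar q v u := by
  have hker : polar q (v - polar q v u • w) u = 0 := by
    rw [polar_sub_left, polar_smul_left, hwu, smul_eq_mul, mul_one, sub_self]
  have := polar_eq_zero_of_zero_iff h hu hker
  rw [polar_sub_left, polar_smul_left, smul_eq_mul, sub_eq_zero] at this
  rw [this, mul_comm]

theorem apply_eq_mul_of_zero_iff (h : ∀ x, q x = 0 ↔ Q x = 0) {u w : V} (hu : q u = 0)
    (hw : q w = 0) (huw : polar q u w = 1) (v : V) : Q v = polar Q u w * q v := by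
  have hwu : polar q w u = 1 := by rw [polar_comm, huw]
  have hQu := polar_eq_mul_polar_of_zero_iff h hu hwu
  have hQw := polar_eq_mul_polar_of_zero_iff h hw huw
  rw [polar_comm Q w u] at hQu
  have of_polar_ne_zero : ∀ x, polar q x u ≠ 0 → Q x = polar Q u w * q x := fun x hx =>
    mul_right_cancel₀ hx <| by
      rw [apply_mul_polar_eq_of_zero_imp (fun x => (h x).mp) hu hx, hQu]; ring
  by_cases hvu : polar q v u = 0
  · have hsum := of_polar_ne_zero (v + w) <| by
      rw [polar_add_left, hvu, hwu, zero_add]; exact one_ne_zero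
    rw [QuadraticMap.map_add Q, QuadraticMap.map_add q, hQw, (h w).mp hw, hw] at hsum
    linear_combination hsum
  · exact of_polar_ne_zero v hvu

end QuadraticMap

theorem stabilizer_of_singular_points_preserves_form_up_to_similarity_general
    {F V : Type*} [Field F] [AddCommGroup V] [Module F V]
    (q : QuadraticForm F V)
    (hnd : ∀ v : V, (∀ w : V, q (v + w) - q v - q w = 0) → v = 0)
    (hwitt : ∃ v : V, v ≠ 0 ∧ q v = 0)
    (g : (V →ₗ[F] V)ˣ)
    (hg : ∀ v : V, v ≠ 0 → (q v = 0 ↔ q (g.val v) = 0)) :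
    ∃ lam : F, lam ≠ 0 ∧ ∀ v : V, q (g.val v) = lam * q v := by
  obtain ⟨u, hu0, hu⟩ := hwitt
  obtain ⟨w, hw, huw⟩ := exists_isotropic_polar_eq_one q hnd hu0 hu
  have hzero : ∀ x, q x = 0 ↔ q.comp g.val x = 0 := fun x => by
    by_cases hx : x = 0
    · simp [hx]
    · exact hg x hx
  have hsim := apply_eq_mul_of_zero_iff hzero hu hw huw
  refine ⟨_, fun hlam => ?_, hsim⟩
  have hquw : q (u + w) = 1 := by rw [QuadraticMap.map_add q, hu, hw, huw, zero_add, zero_add]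
  have := (hzero (u + w)).mpr (by rw [hsim, hlam, zero_mul])
  exact one_ne_zero (hquw.symm.trans this)

/-- Let `F` be a field, `V` a finite-dimensional `F`-vector space and `q`
a quadratic form on `V` whose associated bilinear form `f(v,w) = q(v+w) - q v - q w` is
nondegenerate, and which has Witt index at least `1` (there is a nonzero singular vector).
If `g ∈ GL(V)` stabilizes the set of singular one-dimensional subspaces (equivalently,
for nonzero `v`, `q v = 0 ↔ q (g v) = 0`), then `g` preserves `q` up to similarity:
there is a nonzero scalar `λ` with `q (g v) = λ * q v` for all `v`. -/
theorem stabilizer_of_singular_points_preserves_form_up_to_similarity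
    {F V : Type*} [Field F] [AddCommGroup V] [Module F V] [FiniteDimensional F V]
    (q : QuadraticForm F V)
    (hnd : ∀ v : V, (∀ w : V, q (v + w) - q v - q w = 0) → v = 0)
    (hwitt : ∃ v : V, v ≠ 0 ∧ q v = 0)
    (g : (V →ₗ[F] V)ˣ)
    (hg : ∀ v : V, v ≠ 0 → (q v = 0 ↔ q (g.val v) = 0)) :
    ∃ lam : F, lam ≠ 0 ∧ ∀ v : V, q (g.val v) = lam * q v :=
  stabilizer_of_singular_points_preserves_form_up_to_similarity_general q hnd hwitt g hg
end

section
/- Let p be an odd prime and V a 4-dimensional vector space over GF(p). Let a, b ∈ GL(V) be commuting elements such that the subgroup A = ⟨a,b⟩ is elementary abelian of order p². Assume that [V,a] = C_V(b) and [V,b] = C_V(a), that these two subspaces are distinct, and that both are 2-dimensional. Let v ∈ V \ [V,A], where [V,A] = [V,a] + [V,b]. Then there exists a quadratic form q on V, with nondegenerate associated bilinear form, which is invariant under both a and b, such that q(v) = 0 and q vanishes on the one-dimensional subspace C_V(A) = C_V(a) ∩ C_V(b). -/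
/-!
Put `e = a - 1` and `f = b - 1`. They are nilpotent and `e f = f e = 0`. Being nilpotent on its
2-dimensional range, `e` satisfies `e³ = 0`, and counting dimensions gives
`ker e² = ker f² = [V,A]`, a hyperplane not containing `v`. Hence `v, e v, f v, e² v` is a basis,
in which `f² v = c • e² v` with `c ≠ 0` and `e² v` spans `C_V(A)`. In this basis the symmetric
form with Gram matrix `GO4.gram c` is invariant under `1 + e` and `1 + f` (two matrix identities),
has determinant `-16 c`, and makes `v` and `e² v` isotropic.
-/

open Module LinearMap
open scoped Matrix

theorem sub_one_pow_char_eq_zero {R : Type*} [Ring R] (p : ℕ) [Fact p.Prime] [CharP R p]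
    {x : R} (hx : x ^ p = 1) : (x - 1) ^ p = 0 := by
  rw [sub_pow_char_of_commute p (Commute.one_right x), hx, one_pow, sub_self]

theorem Submodule.finrank_sup_eq_succ {K V : Type*} [Field K] [AddCommGroup V] [Module K V]
    [FiniteDimensional K V] {U W : Submodule K V} {n : ℕ} (hU : finrank K U = n)
    (hW : finrank K W = n) (hne : U ≠ W) (hsup : U ⊔ W ≠ ⊤) (hV : finrank K V = n + 2) :
    finrank K (U ⊔ W : Submodule K V) = n + 1 := by
  have hlt : U < U ⊔ W := by
    refine lt_of_le_of_ne le_sup_left fun h ↦ hne ?_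
    exact (eq_of_le_of_finrank_le (h ▸ le_sup_right) (by rw [hU, hW])).symm
  have h₁ := finrank_lt_finrank_of_lt hlt
  have h₂ := finrank_lt hsup
  omega

namespace Module.End

variable {K V : Type*} [Field K] [AddCommGroup V] [Module K V] {e f : End K V}

theorem linearIndependent_of_apply_apply_eq_zero {v : V} (hfe : ∀ u, f (e u) = 0)
    (hef : ∀ u, e (f u) = 0) (he3 : e (e (e v)) = 0) (he2 : e (e v) ≠ 0) (hf2 : f (f v) ≠ 0) :
    LinearIndependent K ![v, e v, f v, e (e v)] := by
  rw [Fintype.linearIndependent_iff]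
  intro g hg
  simp only [Fin.sum_univ_four, Matrix.cons_val] at hg
  have h0 : g 0 = 0 := by
    simpa [hef, he3, he2] using congr_arg (fun u ↦ e (e u)) hg
  have h1 : g 1 = 0 := by
    simpa [h0, hef, he3, he2] using congr_arg e hg
  have h2 : g 2 = 0 := by
    simpa [h0, h1, hfe, hf2] using congr_arg f hg
  have h3 : g 3 = 0 := by
    simpa [h0, h1, h2, he2] using hg
  intro i
  fin_cases i <;> assumption

variable [FiniteDimensional K V]

theorem pow_finrank_eq_zero_of_isNilpotent (he : IsNilpotent e) : e ^ finrank K V = 0 := by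
  obtain ⟨n, hn⟩ := he
  rw [← ker_eq_top, eq_top_iff, ← ker_eq_top.mpr hn]
  exact ker_pow_le_ker_pow_finrank e n

theorem pow_finrank_range_succ_eq_zero_of_isNilpotent (he : IsNilpotent e) :
    e ^ (finrank K (range e) + 1) = 0 := by
  have hmaps : ∀ x ∈ range e, e x ∈ range e := fun x _ ↦ mem_range_self e x
  have hres := pow_finrank_eq_zero_of_isNilpotent (isNilpotent.restrict hmaps he)
  ext u
  have := congr_arg Subtype.val (LinearMap.congr_fun hres ⟨e u, mem_range_self e u⟩)
  rw [pow_restrict] at this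
  simpa [pow_succ] using this

theorem ker_sq_eq_sup_range (he : IsNilpotent e) (hfe : range f = ker e)
    (hne : range e ≠ range f) (hde : finrank K (range e) = 2) (hdf : finrank K (range f) = 2)
    (hS : finrank K (range e ⊔ range f : Submodule K V) + 1 = finrank K V) :
    ker (e ^ 2) = range e ⊔ range f := by
  have he3 : e ^ 3 = 0 := by
    simpa [hde] using pow_finrank_range_succ_eq_zero_of_isNilpotent he
  have hle : range e ⊔ range f ≤ ker (e ^ 2) := by
    refine sup_le ?_ (hfe ▸ ker_le_ker_comp e e)
    rintro _ ⟨u, rfl⟩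
    rw [mem_ker, ← mul_apply, ← pow_succ, he3, LinearMap.zero_apply]
  have hsq : e ^ 2 ≠ 0 := by
    intro h
    refine hne (Submodule.eq_of_le_of_finrank_le ?_ (by rw [hde, hdf]))
    rintro _ ⟨u, rfl⟩
    rw [hfe, mem_ker, ← mul_apply, ← sq, h, LinearMap.zero_apply]
  refine (Submodule.eq_of_le_of_finrank_le hle ?_).symm
  have := Submodule.finrank_lt (mt ker_eq_top.mp hsq)
  omega

end Module.End

namespace GO4

open Module.End

variable {K V : Type*} [Field K] [AddCommGroup V] [Module K V]

/-- The matrix of `e` in the basis `(v, e v, f v, e² v)`. -/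
def matE : Matrix (Fin 4) (Fin 4) K := !![0, 0, 0, 0; 1, 0, 0, 0; 0, 0, 0, 0; 0, 1, 0, 0]

/-- The matrix of `f` in the basis `(v, e v, f v, e² v)`, where `f² v = c • e² v`. -/
def matF (c : K) : Matrix (Fin 4) (Fin 4) K := !![0, 0, 0, 0; 0, 0, 0, 0; 1, 0, 0, 0; 0, 0, c, 0]

def gram (c : K) : Matrix (Fin 4) (Fin 4) K :=
  !![0, 1, c, 2; 1, -2, 0, 0; c, 0, -2 * c, 0; 2, 0, 0, 0]

theorem gram_transpose (c : K) : (gram c)ᵀ = gram c := by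
  ext i j
  fin_cases i <;> fin_cases j <;> rfl

theorem det_gram (c : K) : (gram c).det = -16 * c := by
  simp [gram, Matrix.det_succ_row_zero, Fin.sum_univ_succ, Fin.succAbove]
  ring

theorem transpose_mul_gram_mul_matE (c : K) : (1 + matE)ᵀ * gram c * (1 + matE) = gram c := by
  ext i j
  fin_cases i <;> fin_cases j <;>
    simp [matE, gram, Matrix.mul_apply, Fin.sum_univ_four, ← add_assoc, one_add_one_eq_two]

theorem transpose_mul_gram_mul_matF (c : K) :
    (1 + matF c)ᵀ * gram c * (1 + matF c) = gram c := by
  ext i j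
  fin_cases i <;> fin_cases j <;> simp [matF, gram, Matrix.mul_apply, Fin.sum_univ_four] <;> ring

theorem toMatrix_eq_matE (bs : Basis (Fin 4) K V) {e : End K V}
    (he : ⇑e ∘ bs = ![bs 1, bs 3, 0, 0]) : toMatrix bs bs e = matE := by
  ext i j
  rw [toMatrix_apply, ← Function.comp_apply (f := e), he]
  fin_cases i <;> fin_cases j <;> simp [matE]

theorem toMatrix_eq_matF (bs : Basis (Fin 4) K V) {f : End K V} {c : K}
    (hf : ⇑f ∘ bs = ![bs 2, 0, c • bs 3, 0]) : toMatrix bs bs f = matF c := by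
  ext i j
  rw [toMatrix_apply, ← Function.comp_apply (f := f), hf]
  fin_cases i <;> fin_cases j <;> simp [matF]

theorem exists_quadraticForm_of_toMatrix (h2 : (2 : K) ≠ 0) {c : K} (hc : c ≠ 0)
    (bs : Basis (Fin 4) K V) {e f : End K V} (he : toMatrix bs bs e = matE)
    (hf : toMatrix bs bs f = matF c) :
    ∃ q : QuadraticForm K V, (∀ u, (∀ w, q (u + w) - q u - q w = 0) → u = 0) ∧
      (∀ u, q ((1 + e) u) = q u) ∧ (∀ u, q ((1 + f) u) = q u) ∧ q (bs 0) = 0 ∧ q (bs 3) = 0 := by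
  set B := Matrix.toLinearMap₂ bs bs (gram c)
  have hB (i j : Fin 4) : B (bs i) (bs j) = gram c i j := Matrix.toLinearMap₂_apply_basis ..
  have hinv (g : End K V) (M : Matrix (Fin 4) (Fin 4) K) (hg : toMatrix bs bs g = M)
      (hM : (1 + M)ᵀ * gram c * (1 + M) = gram c) (u : V) :
      BilinMap.toQuadraticMap B ((1 + g) u) = BilinMap.toQuadraticMap B u := by
    have : B.compl₁₂ (1 + g) (1 + g) = B := by
      rw [← Matrix.toLin_toMatrix bs bs (1 + g), map_add, toMatrix_one, hg,
        Matrix.toLinearMap₂_compl₁₂, hM]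
    rw [BilinMap.toQuadraticMap_apply, BilinMap.toQuadraticMap_apply, ← compl₁₂_apply, this]
  have hsymm : B.flip = B := ext_basis bs bs fun i j ↦ by
    rw [flip_apply, hB, hB, ← Matrix.transpose_apply (gram c), gram_transpose]
  have hsep : B.SeparatingLeft := by
    refine separatingLeft_of_det_ne_zero bs ?_
    rw [toMatrix₂_toLinearMap₂, det_gram, show (-16 : K) = -2 ^ 4 by norm_num]
    exact mul_ne_zero (neg_ne_zero.mpr (pow_ne_zero 4 h2)) hc
  refine ⟨BilinMap.toQuadraticMap B, fun u hu ↦ hsep u fun w ↦ ?_,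
    hinv e _ he (transpose_mul_gram_mul_matE c), hinv f _ hf (transpose_mul_gram_mul_matF c),
    by simp [hB, gram], by simp [hB, gram]⟩
  have := hu w
  rw [← QuadraticMap.polar, BilinMap.polar_toQuadraticMap, ← flip_apply B w u, hsymm,
    ← two_mul] at this
  exact (mul_eq_zero.mp this).resolve_left h2

theorem exists_basis_toMatrix_eq [FiniteDimensional K V] {e f : End K V}
    (hdim : finrank K V = 4) (he : IsNilpotent e) (hf : IsNilpotent f) (hef : range e = ker f)
    (hfe : range f = ker e) (hne : range e ≠ range f) (hde : finrank K (range e) = 2)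
    (hdf : finrank K (range f) = 2) {v : V} (hv : v ∉ range e ⊔ range f) :
    ∃ (c : K) (bs : Basis (Fin 4) K V), c ≠ 0 ∧ bs 0 = v ∧
      toMatrix bs bs e = matE ∧ toMatrix bs bs f = matF c ∧ ker e ⊓ ker f = K ∙ bs 3 := by
  have hS : finrank K (range e ⊔ range f : Submodule K V) = 3 :=
    Submodule.finrank_sup_eq_succ hde hdf hne (fun h ↦ hv (h ▸ Submodule.mem_top)) hdim
  have hI : finrank K (ker e ⊓ ker f : Submodule K V) = 1 := by
    have := Submodule.finrank_sup_add_finrank_inf_eq (range e) (range f)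
    rw [← hef, ← hfe, inf_comm]
    omega
  have hke := ker_sq_eq_sup_range he hfe hne hde hdf (by omega)
  have hkf := ker_sq_eq_sup_range hf hef hne.symm hdf hde (by rw [sup_comm]; omega)
  rw [sup_comm] at hkf
  have he2 : e (e v) ≠ 0 := fun h ↦ hv (hke ▸ by rwa [mem_ker, sq, mul_apply])
  have hf2 : f (f v) ≠ 0 := fun h ↦ hv (hkf ▸ by rwa [mem_ker, sq, mul_apply])
  have he3 : e (e (e v)) = 0 := by
    rw [← mul_apply, ← sq, ← mem_ker, hke]
    exact Submodule.mem_sup_left (mem_range_self e v)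
  have hfe0 (u : V) : f (e u) = 0 := by rw [← mem_ker, ← hef]; exact mem_range_self e u
  have hef0 (u : V) : e (f u) = 0 := by rw [← mem_ker, ← hfe]; exact mem_range_self f u
  have hspan : ker e ⊓ ker f = K ∙ e (e v) := by
    refine (Submodule.eq_of_le_of_finrank_le ?_ ?_).symm
    · rw [Submodule.span_singleton_le_iff_mem, Submodule.mem_inf, mem_ker, mem_ker, he3, hfe0]
      exact ⟨rfl, rfl⟩
    · rw [hI, finrank_span_singleton he2]
  obtain ⟨c, hc⟩ : ∃ c : K, c • e (e v) = f (f v) := by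
    rw [← Submodule.mem_span_singleton, ← hspan, Submodule.mem_inf, mem_ker, mem_ker, hef0,
      ← mul_apply, ← sq, ← mem_ker, hkf]
    exact ⟨rfl, Submodule.mem_sup_right (mem_range_self f v)⟩
  have li := linearIndependent_of_apply_apply_eq_zero hfe0 hef0 he3 he2 hf2
  let bs := basisOfLinearIndependentOfCardEqFinrank li (by simp [hdim])
  have hbs : ⇑bs = ![v, e v, f v, e (e v)] := coe_basisOfLinearIndependentOfCardEqFinrank li _
  refine ⟨c, bs, fun h ↦ hf2 (by rw [← hc, h, zero_smul]), by simp [hbs], ?_, ?_,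
    by simp [hbs, hspan]⟩
  · refine toMatrix_eq_matE bs (funext fun i ↦ ?_)
    fin_cases i <;> simp [hbs, he3, hef0]
  · refine toMatrix_eq_matF bs (funext fun i ↦ ?_)
    fin_cases i <;> simp [hbs, hc, hfe0]

end GO4

theorem exists_invariant_quadratic_form_GO4_general
    {p : ℕ} [Fact p.Prime] (hodd : Odd p)
    (V : Type*) [AddCommGroup V] [Module (ZMod p) V] [FiniteDimensional (ZMod p) V]
    (hdim : finrank (ZMod p) V = 4)
    (a b : (V →ₗ[ZMod p] V)ˣ)
    (hap : a ^ p = 1) (hbp : b ^ p = 1)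
    (hab : LinearMap.range (a.val - 1) = LinearMap.ker (b.val - 1))
    (hba : LinearMap.range (b.val - 1) = LinearMap.ker (a.val - 1))
    (hne : LinearMap.range (a.val - 1) ≠ LinearMap.range (b.val - 1))
    (hda : finrank (ZMod p) (LinearMap.range (a.val - 1)) = 2)
    (hdb : finrank (ZMod p) (LinearMap.range (b.val - 1)) = 2)
    (v : V) (hv : v ∉ LinearMap.range (a.val - 1) ⊔ LinearMap.range (b.val - 1)) :
    ∃ q : QuadraticForm (ZMod p) V,
      (∀ u : V, (∀ w : V, q (u + w) - q u - q w = 0) → u = 0) ∧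
      (∀ u : V, q (a.val u) = q u) ∧ (∀ u : V, q (b.val u) = q u) ∧
      q v = 0 ∧
      (∀ w : V, w ∈ LinearMap.ker (a.val - 1) ⊓ LinearMap.ker (b.val - 1) → q w = 0) := by
  have : Nontrivial V := Module.nontrivial_of_finrank_pos (R := ZMod p) (by omega)
  have : CharP (Module.End (ZMod p) V) p := charP_of_injective_algebraMap' (ZMod p) p
  have hnil (g : (V →ₗ[ZMod p] V)ˣ) (hg : g ^ p = 1) : IsNilpotent (g.val - 1) :=
    ⟨p, sub_one_pow_char_eq_zero p (by rw [← Units.val_pow_eq_pow_val, hg, Units.val_one])⟩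
  have h2 : (2 : ZMod p) ≠ 0 :=
    Ring.two_ne_zero (by rw [ZMod.ringChar_zmod_n]; exact hodd.ne_two_of_dvd_nat dvd_rfl)
  obtain ⟨c, bs, hc, rfl, he, hf, hker⟩ :=
    GO4.exists_basis_toMatrix_eq hdim (hnil a hap) (hnil b hbp) hab hba hne hda hdb hv
  obtain ⟨q, hnd, hqa, hqb, hq0, hq3⟩ := GO4.exists_quadraticForm_of_toMatrix h2 hc bs he hf
  refine ⟨q, hnd, fun u ↦ by simpa using hqa u, fun u ↦ by simpa using hqb u, hq0, fun w hw ↦ ?_⟩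
  obtain ⟨t, rfl⟩ := Submodule.mem_span_singleton.mp (hker ▸ hw)
  rw [QuadraticMap.map_smul, hq3, smul_zero]

/-- Let `p` be an odd prime and `V` a 4-dimensional vector space over
`GF(p)`.  Let `a, b ∈ GL(V)` commute, generating an elementary abelian group `A` of order
`p²`, with `[V,a] = C_V(b)` and `[V,b] = C_V(a)` distinct of dimension `2`.  For any
`v ∈ V \ [V,A]` there is an `⟨a,b⟩`-invariant quadratic form on `V` with nondegenerate
associated bilinear form, for which `v` is singular and `C_V(A)` is a singular
one-space. -/
theorem exists_invariant_quadratic_form_GO4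
    {p : ℕ} [Fact p.Prime] (hodd : Odd p)
    (V : Type*) [AddCommGroup V] [Module (ZMod p) V] [FiniteDimensional (ZMod p) V]
    (hdim : finrank (ZMod p) V = 4)
    (a b : (V →ₗ[ZMod p] V)ˣ)
    (hcomm : Commute a b) (hap : a ^ p = 1) (hbp : b ^ p = 1)
    (hcard : Nat.card (Subgroup.closure {a, b} : Subgroup (V →ₗ[ZMod p] V)ˣ) = p ^ 2)
    (hab : LinearMap.range (a.val - 1) = LinearMap.ker (b.val - 1))
    (hba : LinearMap.range (b.val - 1) = LinearMap.ker (a.val - 1))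
    (hne : LinearMap.range (a.val - 1) ≠ LinearMap.range (b.val - 1))
    (hda : finrank (ZMod p) (LinearMap.range (a.val - 1)) = 2)
    (hdb : finrank (ZMod p) (LinearMap.range (b.val - 1)) = 2)
    (v : V) (hv : v ∉ LinearMap.range (a.val - 1) ⊔ LinearMap.range (b.val - 1)) :
    ∃ q : QuadraticForm (ZMod p) V,
      (∀ u : V, (∀ w : V, q (u + w) - q u - q w = 0) → u = 0) ∧
      (∀ u : V, q (a.val u) = q u) ∧ (∀ u : V, q (b.val u) = q u) ∧
      q v = 0 ∧
      (∀ w : V, w ∈ LinearMap.ker (a.val - 1) ⊓ LinearMap.ker (b.val - 1) → q w = 0) :=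
  exists_invariant_quadratic_form_GO4_general hodd V hdim a b hap hbp hab hba hne hda hdb v hv
end
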